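/- arXiv:2303.10117 — 2 statements merged into one kernel-verified Lean document; each statement's English description precedes it below -/
import Mathlib

section
/- Let G₁, …, G_K be a partition of {1,…,N} and Ĝ₁, …, Ĝ_K another partition. Suppose there is a symmetric distance D̂ : {1,…,N}² → ℝ such that max over pairs (i,j) lying in a common true group G_k of D̂_{ij} is strictly less than the min of D̂_{ij} over pairs in distinct true groups. Then single-linkage agglomerative clustering on D̂, stopped at K clusters, recovers exactly the partition {G₁,…,G_K}. -/
/-- Single-linkage distance between two clusters: the minimum pairwise distance. -/
noncomputable def singleLinkDist {N : ℕ} (D : Fin N → Fin N → ℝ)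
    (A B : Finset (Fin N)) : ℝ :=
  sInf {r : ℝ | ∃ i ∈ A, ∃ j ∈ B, r = D i j}

/-- One step of single-linkage agglomerative clustering: merge two distinct clusters
of `P` at minimal single-linkage distance. -/
def IsMergeStep {N : ℕ} (D : Fin N → Fin N → ℝ)
    (P Q : Finset (Finset (Fin N))) : Prop :=
  ∃ A ∈ P, ∃ B ∈ P, A ≠ B ∧
    (∀ A' ∈ P, ∀ B' ∈ P, A' ≠ B' → singleLinkDist D A B ≤ singleLinkDist D A' B') ∧
    Q = insert (A ∪ B) ((P.erase A).erase B)

/-!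
Along the run, the current clusters form a partition refining the true one. While there are more
clusters than groups, by pigeonhole two distinct clusters lie in a common group, so the minimal
linkage is attained at a within-group distance and is therefore smaller than every between-group
distance: the two clusters that get merged lie in one group, and the refinement persists. After
`N - K` merges there are exactly `K` clusters, and a refinement with as many parts as the partition
it refines is that partition.
-/

open Finset Function

namespace Finpartition

section Lattice

variable {α : Type*} [Lattice α] [OrderBot α] {a : α} {P Q : Finpartition a}

lemma exists_ne_le_of_card_lt (hPQ : P ≤ Q) (h : #Q.parts < #P.parts) :
    ∃ A ∈ P.parts, ∃ B ∈ P.parts, A ≠ B ∧ ∃ C ∈ Q.parts, A ≤ C ∧ B ≤ C := by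
  choose φ hφ hle using fun A : P.parts => hPQ A.2
  obtain ⟨A, B, hAB, hφAB⟩ :=
    Fintype.exists_ne_map_eq_of_card_lt (fun A => (⟨φ A, hφ A⟩ : Q.parts)) (by simpa using h)
  simp only [Subtype.mk.injEq] at hφAB
  exact ⟨A, A.2, B, B.2, Subtype.coe_ne_coe.2 hAB, φ A, hφ A, hle A, hφAB ▸ hle B⟩

end Lattice

section Finset

variable {α : Type*} [DecidableEq α] {s : Finset α} {P Q : Finpartition s}

lemma eq_of_le_of_card_parts_le (hPQ : P ≤ Q) (h : #P.parts ≤ #Q.parts) : P = Q := by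
  choose φ hφ hle using fun A (hA : A ∈ P.parts) => hPQ hA
  -- `φ` sends a part of `P` to the part of `Q` containing it; it is onto, hence one-to-one.
  have hsurj : ∀ C ∈ Q.parts, ∃ A hA, φ A hA = C := fun C hC => by
    obtain ⟨x, hx⟩ := Q.nonempty_of_mem_parts hC
    obtain ⟨A, hA, hxA⟩ := P.exists_mem (Q.le hC hx)
    exact ⟨A, hA, Q.eq_of_mem_parts (hφ A hA) hC (hle A hA hxA) hx⟩
  have hinj := inj_on_of_surj_on_of_card_le φ hφ hsurj h
  refine le_antisymm hPQ fun C hC => ?_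
  obtain ⟨A, hA, rfl⟩ := hsurj C hC
  refine ⟨A, hA, fun x hx => ?_⟩
  obtain ⟨A', hA', hxA'⟩ := P.exists_mem (Q.le hC hx)
  rwa [← hinj hA' hA (Q.eq_of_mem_parts (hφ A' hA') hC (hle A' hA' hxA') hx)]

section Merge

variable {A B : Finset α}

def merge (P : Finpartition s) (hA : A ∈ P.parts) (hB : B ∈ P.parts) (hAB : A ≠ B) :
    Finpartition s where
  parts := insert (A ∪ B) ((P.parts.erase A).erase B)
  supIndep := by
    rw [supIndep_iff_pairwiseDisjoint, coe_insert]
    refine (P.disjoint.subset fun C hC => ?_).insert fun C hC _ => ?_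
    · exact erase_subset _ _ (erase_subset _ _ hC)
    · obtain ⟨⟨hC, hCA⟩, hCB⟩ : (C ∈ P.parts ∧ C ≠ A) ∧ C ≠ B := by simpa using hC
      exact disjoint_union_left.2 ⟨P.disjoint hA hC hCA.symm, P.disjoint hB hC hCB.symm⟩
  sup_parts := by
    have hsplit : P.parts = insert A (insert B ((P.parts.erase A).erase B)) := by
      rw [insert_erase (mem_erase.2 ⟨hAB.symm, hB⟩), insert_erase hA]
    conv_rhs => rw [← P.sup_parts, hsplit]
    simp only [sup_insert, id, sup_eq_union, union_assoc]
  bot_notMem := by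
    rw [mem_insert, not_or, bot_eq_empty]
    exact ⟨((P.nonempty_of_mem_parts hA).mono subset_union_left).ne_empty.symm,
      fun h => P.empty_notMem_parts (erase_subset _ _ (erase_subset _ _ h))⟩

variable (hA : A ∈ P.parts) (hB : B ∈ P.parts) (hAB : A ≠ B)

lemma merge_parts :
    (P.merge hA hB hAB).parts = insert (A ∪ B) ((P.parts.erase A).erase B) :=
  rfl

lemma card_merge_parts : #(P.merge hA hB hAB).parts + 1 = #P.parts := by
  have hfresh : A ∪ B ∉ (P.parts.erase A).erase B := fun h => by
    obtain ⟨-, hne, hmem⟩ : A ∪ B ≠ B ∧ A ∪ B ≠ A ∧ A ∪ B ∈ P.parts := by simpa using h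
    obtain ⟨a, ha⟩ := P.nonempty_of_mem_parts hA
    exact disjoint_left.1 (P.disjoint hA hmem hne.symm) ha (mem_union_left _ ha)
  rw [merge_parts, card_insert_of_notMem hfresh, card_erase_add_one (mem_erase.2 ⟨hAB.symm, hB⟩),
    card_erase_add_one hA]

lemma merge_le {C : Finset α} (hPQ : P ≤ Q) (hC : C ∈ Q.parts) (hAC : A ⊆ C) (hBC : B ⊆ C) :
    P.merge hA hB hAB ≤ Q := by
  intro X hX
  rcases mem_insert.1 hX with rfl | hX
  · exact ⟨C, hC, union_subset hAC hBC⟩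
  · exact hPQ (erase_subset _ _ (erase_subset _ _ hX))

end Merge

def IsSeparated (D : α → α → ℝ) (T : Finpartition s) : Prop :=
  ∀ C ∈ T.parts, ∀ E ∈ T.parts, ∀ E' ∈ T.parts, E ≠ E' →
    ∀ i ∈ C, ∀ j ∈ C, ∀ i' ∈ E, ∀ j' ∈ E', D i j < D i' j'

section OfCover

variable {ι : Type*} [Fintype α] [Fintype ι]

def ofCover (G : ι → Finset α) (hne : ∀ k, (G k).Nonempty) (hdisj : Pairwise (Disjoint on G))
    (hcover : ∀ a, ∃ k, a ∈ G k) : Finpartition (univ : Finset α) :=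
  ofExistsUnique (univ.image G) (fun _ _ => subset_univ _)
    (fun a _ => by
      obtain ⟨k, hk⟩ := hcover a
      refine ⟨G k, ⟨mem_image_of_mem G (mem_univ k), hk⟩, ?_⟩
      rintro _ ⟨hl, ha⟩
      obtain ⟨l, -, rfl⟩ := mem_image.1 hl
      by_contra hlk
      exact disjoint_left.1 (hdisj (ne_of_apply_ne G hlk)) ha hk)
    (fun h => by
      obtain ⟨k, -, hk⟩ := mem_image.1 h
      exact (hne k).ne_empty hk)

variable {G : ι → Finset α} {hne : ∀ k, (G k).Nonempty} {hdisj : Pairwise (Disjoint on G)}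
  {hcover : ∀ a, ∃ k, a ∈ G k}

lemma ofCover_parts : (ofCover G hne hdisj hcover).parts = univ.image G :=
  rfl

lemma card_ofCover_parts : #(ofCover G hne hdisj hcover).parts = Fintype.card ι := by
  rw [ofCover_parts, card_image_of_injective _ fun k l hkl => ?_, card_univ]
  by_contra hkl'
  have hdisj_kl : Disjoint (G k) (G l) := hdisj hkl'
  rw [hkl, disjoint_self_iff_empty] at hdisj_kl
  exact (hne l).ne_empty hdisj_kl

lemma isSeparated_ofCover {D : α → α → ℝ}
    (hsep : ∀ k, ∀ i ∈ G k, ∀ j ∈ G k, ∀ k' l', k' ≠ l' → ∀ i' ∈ G k', ∀ j' ∈ G l',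
      D i j < D i' j') :
    (ofCover G hne hdisj hcover).IsSeparated D := by
  simp only [IsSeparated, ofCover_parts, mem_image, mem_univ, true_and, forall_exists_index,
    forall_apply_eq_imp_iff]
  exact fun k k' l' hne' i hi j hj => hsep k i hi j hj k' l' (ne_of_apply_ne G hne')

end OfCover

end Finset

end Finpartition

section SingleLinkage

variable {N : ℕ} {D : Fin N → Fin N → ℝ} {A B : Finset (Fin N)}

lemma singleLinkDist_eq_inf' (h : (A ×ˢ B).Nonempty) :
    singleLinkDist D A B = (A ×ˢ B).inf' h fun p => D p.1 p.2 := by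
  rw [inf'_eq_csInf_image, singleLinkDist]
  congr 1
  ext r
  simp [eq_comm]

lemma exists_singleLinkDist_eq (hA : A.Nonempty) (hB : B.Nonempty) :
    ∃ i ∈ A, ∃ j ∈ B, singleLinkDist D A B = D i j := by
  obtain ⟨⟨i, j⟩, hij, heq⟩ := exists_mem_eq_inf' (hA.product hB) fun p => D p.1 p.2
  exact ⟨i, (mem_product.1 hij).1, j, (mem_product.1 hij).2, (singleLinkDist_eq_inf' _).trans heq⟩

namespace Finpartition

variable {s : Finset (Fin N)} {P T : Finpartition s}

lemma IsSeparated.exists_part_superset_of_minimal (hT : T.IsSeparated D) (hPT : P ≤ T)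
    (hcard : #T.parts < #P.parts) (hA : A ∈ P.parts) (hB : B ∈ P.parts)
    (hmin : ∀ A' ∈ P.parts, ∀ B' ∈ P.parts, A' ≠ B' →
      singleLinkDist D A B ≤ singleLinkDist D A' B') :
    ∃ C ∈ T.parts, A ⊆ C ∧ B ⊆ C := by
  obtain ⟨C, hC, C', hC', hCC', E, hE, hCE, hC'E⟩ := exists_ne_le_of_card_lt hPT hcard
  obtain ⟨i, hi, j, hj, hij⟩ :=
    exists_singleLinkDist_eq (D := D) (P.nonempty_of_mem_parts hC) (P.nonempty_of_mem_parts hC')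
  obtain ⟨a, ha, b, hb, hab⟩ :=
    exists_singleLinkDist_eq (D := D) (P.nonempty_of_mem_parts hA) (P.nonempty_of_mem_parts hB)
  obtain ⟨EA, hEA, hAEA⟩ := hPT hA
  obtain ⟨EB, hEB, hBEB⟩ := hPT hB
  obtain rfl : EA = EB := by
    by_contra hne
    have hsep := hT E hE EA hEA EB hEB hne i (hCE hi) j (hC'E hj) a (hAEA ha) b (hBEB hb)
    have hle := hmin C hC C' hC' hCC'
    linarith
  exact ⟨EA, hEA, hAEA, hBEB⟩

lemma IsSeparated.exists_le_of_isMergeStep (hT : T.IsSeparated D) (hPT : P ≤ T)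
    (hcard : #T.parts < #P.parts) {F : Finset (Finset (Fin N))} (hF : IsMergeStep D P.parts F) :
    ∃ P' : Finpartition s, P'.parts = F ∧ P' ≤ T ∧ #P'.parts + 1 = #P.parts := by
  obtain ⟨A, hA, B, hB, hAB, hmin, rfl⟩ := hF
  obtain ⟨C, hC, hAC, hBC⟩ := hT.exists_part_superset_of_minimal hPT hcard hA hB hmin
  exact ⟨P.merge hA hB hAB, rfl, merge_le hA hB hAB hPT hC hAC hBC, card_merge_parts hA hB hAB⟩

lemma IsSeparated.exists_le_of_forall_isMergeStep (hT : T.IsSeparated D)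
    {f : ℕ → Finset (Finset (Fin N))} (P₀ : Finpartition s) (hP₀ : P₀.parts = f 0)
    (hP₀T : P₀ ≤ T) {n : ℕ} (hn : n + #T.parts ≤ #P₀.parts)
    (hstep : ∀ m < n, IsMergeStep D (f m) (f (m + 1))) :
    ∃ P : Finpartition s, P.parts = f n ∧ P ≤ T ∧ #P.parts + n = #P₀.parts := by
  induction n with
  | zero => exact ⟨P₀, hP₀, hP₀T, rfl⟩
  | succ m ih =>
    obtain ⟨P, hP, hPT, hPcard⟩ := ih (by omega) fun k hk => hstep k (by omega)
    obtain ⟨P', hP', hP'T, hP'card⟩ :=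
      hT.exists_le_of_isMergeStep hPT (by omega) (hP ▸ hstep m (by omega))
    exact ⟨P', hP', hP'T, by omega⟩

end Finpartition

end SingleLinkage

theorem single_linkage_recovers_partition_general
    {N K : ℕ} (hKN : K ≤ N)
    (D : Fin N → Fin N → ℝ)
    (G : Fin K → Finset (Fin N))
    (hGne : ∀ k, (G k).Nonempty)
    (hGdisj : ∀ k l, k ≠ l → Disjoint (G k) (G l))
    (hGcover : ∀ i : Fin N, ∃ k, i ∈ G k)
    (hsep : ∀ k : Fin K, ∀ i ∈ G k, ∀ j ∈ G k,
      ∀ k' l' : Fin K, k' ≠ l' → ∀ i' ∈ G k', ∀ j' ∈ G l', D i j < D i' j')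
    (f : ℕ → Finset (Finset (Fin N)))
    (hf0 : f 0 = Finset.univ.image (fun i : Fin N => ({i} : Finset (Fin N))))
    (hstep : ∀ m < N - K, IsMergeStep D (f m) (f (m + 1))) :
    f (N - K) = Finset.univ.image G := by
  let T := Finpartition.ofCover G hGne (fun k l => hGdisj k l) hGcover
  have hT : T.IsSeparated D := Finpartition.isSeparated_ofCover hsep
  have hTcard : #T.parts = K := Finpartition.card_ofCover_parts.trans (Fintype.card_fin K)
  have h₀ : (⊥ : Finpartition univ).parts = f 0 := by
    rw [hf0, Finpartition.parts_bot, map_eq_image]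
    rfl
  have h₀card : #(⊥ : Finpartition (univ : Finset (Fin N))).parts = N := by
    rw [Finpartition.card_bot, card_univ, Fintype.card_fin]
  obtain ⟨P, hP, hPT, hPcard⟩ := hT.exists_le_of_forall_isMergeStep ⊥ h₀ bot_le (by omega) hstep
  rw [← hP, Finpartition.eq_of_le_of_card_parts_le hPT (by omega)]
  rfl

/-- If the maximal within-group distance is strictly smaller than the
minimal between-group distance, then single-linkage agglomerative clustering started
from singletons and stopped at `K` clusters recovers exactly the true partition
`{G₁,…,G_K}`. -/
theorem single_linkage_recovers_partition
    {N K : ℕ} (hK : 1 ≤ K) (hKN : K ≤ N)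
    (D : Fin N → Fin N → ℝ)
    (hDsymm : ∀ i j, D i j = D j i)
    (G : Fin K → Finset (Fin N))
    (hGne : ∀ k, (G k).Nonempty)
    (hGdisj : ∀ k l, k ≠ l → Disjoint (G k) (G l))
    (hGcover : ∀ i : Fin N, ∃ k, i ∈ G k)
    (hsep : ∀ k : Fin K, ∀ i ∈ G k, ∀ j ∈ G k,
      ∀ k' l' : Fin K, k' ≠ l' → ∀ i' ∈ G k', ∀ j' ∈ G l', D i j < D i' j')
    (f : ℕ → Finset (Finset (Fin N)))
    (hf0 : f 0 = Finset.univ.image (fun i : Fin N => ({i} : Finset (Fin N))))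
    (hstep : ∀ m < N - K, IsMergeStep D (f m) (f (m + 1))) :
    f (N - K) = Finset.univ.image G :=
  single_linkage_recovers_partition_general hKN D G hGne hGdisj hGcover hsep f hf0 hstep
end

section
/- With a₁, a₂, Δ₁, Δ₂, n₁, n₂, a* as above, suppose additionally that all eigenvalues of Δ₁ and Δ₂ lie in [λ̲, λ̄] with 0 < λ̲ ≤ λ̄. Then n₁|a₁ − a*|² + n₂|a₂ − a*|² ≥ (λ̲/λ̄)²·(n₁n₂/(n₁+n₂))·|a₁ − a₂|². -/
open Matrix

/-!
With `M = n₁Δ₁ + n₂Δ₂`, the normal equation `M a* = n₁Δ₁a₁ + n₂Δ₂a₂` gives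
`M (a₁ - a*) = n₂Δ₂ (a₁ - a₂)` and `M (a₂ - a*) = n₁Δ₁ (a₂ - a₁)`. The quadratic-form bounds
control both sides: `|Δᵢu| ≥ λ̲|u|` by Cauchy–Schwarz, and `|Mv| ≤ (n₁ + n₂)λ̄|v|` because a
positive semidefinite form dominated by `c|·|²` has operator norm at most `c`. Hence
`(n₁ + n₂)²λ̄²|a₁ - a*|² ≥ n₂²λ̲²|a₁ - a₂|²`, symmetrically for `a₂`, and adding the two bounds
with weights `n₁, n₂` gives the claim.
-/

namespace Matrix

variable {ι : Type*} [Fintype ι]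

theorem dotProduct_self_nonneg {R : Type*} [Ring R] [LinearOrder R] [IsStrictOrderedRing R]
    (v : ι → R) : 0 ≤ v ⬝ᵥ v :=
  Finset.sum_nonneg fun i _ => mul_self_nonneg (v i)

theorem IsHermitian.dotProduct_mulVec_comm {M : Matrix ι ι ℝ} (hM : M.IsHermitian)
    (x y : ι → ℝ) : x ⬝ᵥ M *ᵥ y = y ⬝ᵥ M *ᵥ x := by
  rw [dotProduct_mulVec, ← mulVec_transpose, ← conjTranspose_eq_transpose_of_trivial, hM,
    dotProduct_comm]

theorem PosSemidef.dotProduct_mulVec_sq_le {M : Matrix ι ι ℝ} (hM : M.PosSemidef)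
    (x y : ι → ℝ) : (x ⬝ᵥ M *ᵥ y) ^ 2 ≤ (x ⬝ᵥ M *ᵥ x) * (y ⬝ᵥ M *ᵥ y) := by
  classical
  have := LinearMap.BilinForm.apply_mul_apply_le_of_forall_zero_le (toLinearMap₂' ℝ M)
    (fun z => by simpa [toLinearMap₂'_apply'] using hM.dotProduct_mulVec_nonneg z) x y
  simpa only [toLinearMap₂'_apply', hM.isHermitian.dotProduct_mulVec_comm y x, ← sq] using this

theorem PosSemidef.mulVec_dotProduct_mulVec_le {M : Matrix ι ι ℝ} (hM : M.PosSemidef) {c : ℝ}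
    (hc : ∀ x, x ⬝ᵥ M *ᵥ x ≤ c * (x ⬝ᵥ x)) (v : ι → ℝ) :
    M *ᵥ v ⬝ᵥ M *ᵥ v ≤ c ^ 2 * (v ⬝ᵥ v) := by
  set w := M *ᵥ v
  have hform_nonneg (x : ι → ℝ) : 0 ≤ x ⬝ᵥ M *ᵥ x := by
    simpa using hM.dotProduct_mulVec_nonneg x
  have key : (w ⬝ᵥ w) * (w ⬝ᵥ w) ≤ c ^ 2 * (v ⬝ᵥ v) * (w ⬝ᵥ w) :=
    calc (w ⬝ᵥ w) * (w ⬝ᵥ w) = (v ⬝ᵥ M *ᵥ w) ^ 2 := by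
          rw [hM.isHermitian.dotProduct_mulVec_comm, sq]
      _ ≤ (v ⬝ᵥ M *ᵥ v) * (w ⬝ᵥ M *ᵥ w) := hM.dotProduct_mulVec_sq_le v w
      _ ≤ (c * (v ⬝ᵥ v)) * (c * (w ⬝ᵥ w)) :=
          mul_le_mul (hc v) (hc w) (hform_nonneg w) ((hform_nonneg v).trans (hc v))
      _ = c ^ 2 * (v ⬝ᵥ v) * (w ⬝ᵥ w) := by ring
  rcases (dotProduct_self_nonneg w).eq_or_lt with hw | hw
  · rw [← hw]
    exact mul_nonneg (sq_nonneg c) (dotProduct_self_nonneg v)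
  · exact le_of_mul_le_mul_right key hw

theorem sq_mul_dotProduct_self_le_mulVec_dotProduct_mulVec {M : Matrix ι ι ℝ} {c : ℝ}
    (hc₀ : 0 ≤ c) (hc : ∀ x, c * (x ⬝ᵥ x) ≤ x ⬝ᵥ M *ᵥ x) (u : ι → ℝ) :
    c ^ 2 * (u ⬝ᵥ u) ≤ M *ᵥ u ⬝ᵥ M *ᵥ u := by
  have key : c ^ 2 * (u ⬝ᵥ u) * (u ⬝ᵥ u) ≤ (M *ᵥ u ⬝ᵥ M *ᵥ u) * (u ⬝ᵥ u) :=
    calc c ^ 2 * (u ⬝ᵥ u) * (u ⬝ᵥ u) = (c * (u ⬝ᵥ u)) ^ 2 := by ring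
      _ ≤ (u ⬝ᵥ M *ᵥ u) ^ 2 :=
          pow_le_pow_left₀ (mul_nonneg hc₀ (dotProduct_self_nonneg u)) (hc u) 2
      _ ≤ (u ⬝ᵥ u) * (M *ᵥ u ⬝ᵥ M *ᵥ u) := by
          simpa only [dotProduct, sq] using Finset.sum_mul_sq_le_sq_mul_sq Finset.univ u (M *ᵥ u)
      _ = (M *ᵥ u ⬝ᵥ M *ᵥ u) * (u ⬝ᵥ u) := mul_comm _ _
  rcases (dotProduct_self_nonneg u).eq_or_lt with hu | hu
  · rw [← hu, mul_zero]
    exact dotProduct_self_nonneg _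
  · exact le_of_mul_le_mul_right key hu

theorem add_mulVec_sub_eq_of_add_mulVec_eq {R : Type*} [CommRing R] {A B : Matrix ι ι R}
    {a b s : ι → R} (hs : (A + B) *ᵥ s = A *ᵥ a + B *ᵥ b) :
    (A + B) *ᵥ (a - s) = B *ᵥ (a - b) := by
  rw [mulVec_sub, hs, add_mulVec, mulVec_sub]
  abel

theorem dotProduct_smul_add_smul_mulVec (t₁ t₂ : ℝ) (Δ₁ Δ₂ : Matrix ι ι ℝ) (x : ι → ℝ) :
    x ⬝ᵥ (t₁ • Δ₁ + t₂ • Δ₂) *ᵥ x = t₁ * (x ⬝ᵥ Δ₁ *ᵥ x) + t₂ * (x ⬝ᵥ Δ₂ *ᵥ x) := by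
  simp only [add_mulVec, smul_mulVec, dotProduct_add, dotProduct_smul, smul_eq_mul]

end Matrix

theorem pseudo_coefficient_group_bound {ι : Type*} [Fintype ι] {Δ₁ Δ₂ : Matrix ι ι ℝ}
    (hΔ₁ : Δ₁.PosSemidef) (hΔ₂ : Δ₂.PosSemidef) {lo hi n₁ n₂ : ℝ} (hlo : 0 ≤ lo)
    (hn₁ : 0 ≤ n₁) (hn₂ : 0 ≤ n₂)
    (hΔ₁hi : ∀ x, x ⬝ᵥ Δ₁ *ᵥ x ≤ hi * (x ⬝ᵥ x)) (hΔ₂hi : ∀ x, x ⬝ᵥ Δ₂ *ᵥ x ≤ hi * (x ⬝ᵥ x))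
    (hΔ₂lo : ∀ x, lo * (x ⬝ᵥ x) ≤ x ⬝ᵥ Δ₂ *ᵥ x) {a₁ a₂ s : ι → ℝ}
    (hs : (n₁ • Δ₁ + n₂ • Δ₂) *ᵥ s = (n₁ • Δ₁) *ᵥ a₁ + (n₂ • Δ₂) *ᵥ a₂) :
    (n₂ * lo) ^ 2 * ((a₁ - a₂) ⬝ᵥ (a₁ - a₂)) ≤
      ((n₁ + n₂) * hi) ^ 2 * ((a₁ - s) ⬝ᵥ (a₁ - s)) := by
  have hM : (n₁ • Δ₁ + n₂ • Δ₂).PosSemidef := (hΔ₁.smul hn₁).add (hΔ₂.smul hn₂)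
  have hMhi (x : ι → ℝ) : x ⬝ᵥ (n₁ • Δ₁ + n₂ • Δ₂) *ᵥ x ≤ (n₁ + n₂) * hi * (x ⬝ᵥ x) := by
    rw [dotProduct_smul_add_smul_mulVec]
    nlinarith [mul_le_mul_of_nonneg_left (hΔ₁hi x) hn₁, mul_le_mul_of_nonneg_left (hΔ₂hi x) hn₂]
  have hΔ₂lo' (x : ι → ℝ) : n₂ * lo * (x ⬝ᵥ x) ≤ x ⬝ᵥ (n₂ • Δ₂) *ᵥ x := by
    rw [smul_mulVec, dotProduct_smul, smul_eq_mul, mul_assoc]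
    exact mul_le_mul_of_nonneg_left (hΔ₂lo x) hn₂
  calc (n₂ * lo) ^ 2 * ((a₁ - a₂) ⬝ᵥ (a₁ - a₂))
      ≤ (n₂ • Δ₂) *ᵥ (a₁ - a₂) ⬝ᵥ (n₂ • Δ₂) *ᵥ (a₁ - a₂) :=
        sq_mul_dotProduct_self_le_mulVec_dotProduct_mulVec (mul_nonneg hn₂ hlo) hΔ₂lo' _
    _ = (n₁ • Δ₁ + n₂ • Δ₂) *ᵥ (a₁ - s) ⬝ᵥ (n₁ • Δ₁ + n₂ • Δ₂) *ᵥ (a₁ - s) := by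
        rw [add_mulVec_sub_eq_of_add_mulVec_eq hs]
    _ ≤ ((n₁ + n₂) * hi) ^ 2 * ((a₁ - s) ⬝ᵥ (a₁ - s)) := hM.mulVec_dotProduct_mulVec_le hMhi _

/-- Under-fitting penalty: with eigenvalues of `Δ₁, Δ₂` in `[λ̲, λ̄]`
and `a* = (n₁Δ₁+n₂Δ₂)⁻¹(n₁Δ₁a₁+n₂Δ₂a₂)`,
`n₁|a₁ − a*|² + n₂|a₂ − a*|² ≥ (λ̲/λ̄)²·(n₁n₂/(n₁+n₂))·|a₁ − a₂|²`. -/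
theorem pseudo_coefficient_separation_lower_bound
    {d : ℕ} (Δ₁ Δ₂ : Matrix (Fin d) (Fin d) ℝ)
    (hΔ₁ : Δ₁.PosDef) (hΔ₂ : Δ₂.PosDef)
    (lo hi : ℝ) (hlo : 0 < lo) (hlohi : lo ≤ hi)
    (hΔ₁Eig : ∀ x : Fin d → ℝ,
      lo * (x ⬝ᵥ x) ≤ x ⬝ᵥ Δ₁.mulVec x ∧ x ⬝ᵥ Δ₁.mulVec x ≤ hi * (x ⬝ᵥ x))
    (hΔ₂Eig : ∀ x : Fin d → ℝ,
      lo * (x ⬝ᵥ x) ≤ x ⬝ᵥ Δ₂.mulVec x ∧ x ⬝ᵥ Δ₂.mulVec x ≤ hi * (x ⬝ᵥ x))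
    (n₁ n₂ : ℝ) (hn₁ : 0 < n₁) (hn₂ : 0 < n₂)
    (a₁ a₂ astar : Fin d → ℝ)
    (hastar : astar =
      (n₁ • Δ₁ + n₂ • Δ₂)⁻¹.mulVec (n₁ • Δ₁.mulVec a₁ + n₂ • Δ₂.mulVec a₂)) :
    (lo / hi) ^ 2 * (n₁ * n₂ / (n₁ + n₂)) * ((a₁ - a₂) ⬝ᵥ (a₁ - a₂)) ≤
      n₁ * ((a₁ - astar) ⬝ᵥ (a₁ - astar)) + n₂ * ((a₂ - astar) ⬝ᵥ (a₂ - astar)) := by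
  have hM : (n₁ • Δ₁ + n₂ • Δ₂).PosDef := (hΔ₁.smul hn₁).add (hΔ₂.smul hn₂)
  have hs : (n₁ • Δ₁ + n₂ • Δ₂) *ᵥ astar = (n₁ • Δ₁) *ᵥ a₁ + (n₂ • Δ₂) *ᵥ a₂ := by
    rw [hastar, mulVec_mulVec, mul_nonsing_inv _ hM.det_pos.ne'.isUnit, one_mulVec,
      smul_mulVec, smul_mulVec]
  have h₁ := pseudo_coefficient_group_bound hΔ₁.posSemidef hΔ₂.posSemidef hlo.le hn₁.le hn₂.le
    (hΔ₁Eig · |>.2) (hΔ₂Eig · |>.2) (hΔ₂Eig · |>.1) hs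
  have h₂ := pseudo_coefficient_group_bound hΔ₂.posSemidef hΔ₁.posSemidef hlo.le hn₂.le hn₁.le
    (hΔ₂Eig · |>.2) (hΔ₁Eig · |>.2) (hΔ₁Eig · |>.1) (a₁ := a₂) (a₂ := a₁)
    (by rw [add_comm (n₂ • Δ₂), hs, add_comm])
  rw [add_comm n₂, ← neg_sub a₁ a₂, neg_dotProduct, dotProduct_neg, neg_neg] at h₂
  have hhi : 0 < hi := hlo.trans_le hlohi
  set U := (a₁ - a₂) ⬝ᵥ (a₁ - a₂)
  set V₁ := (a₁ - astar) ⬝ᵥ (a₁ - astar)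
  set V₂ := (a₂ - astar) ⬝ᵥ (a₂ - astar)
  set C := ((n₁ + n₂) * hi) ^ 2
  have hC : 0 < C := by positivity
  calc (lo / hi) ^ 2 * (n₁ * n₂ / (n₁ + n₂)) * U
      = (n₁ * ((n₂ * lo) ^ 2 * U) + n₂ * ((n₁ * lo) ^ 2 * U)) / C := by
        field_simp
        ring
    _ ≤ (n₁ * (C * V₁) + n₂ * (C * V₂)) / C := by gcongr
    _ = n₁ * V₁ + n₂ * V₂ := by field_simp
end
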